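/- arXiv:2512.02766 — 3 statements merged into one kernel-verified Lean document; each statement's English description precedes it below -/
import Mathlib

section
/- The Jacobian of the change of variables (β₁, β₂) ↦ (β̌, β') where 2β̌ = β₁ + β₂ + W and 1/(2β') = (1/4)·(2β₁+2β₂+2W)/(4β₁β₂ - W²) satisfies |det D(β̌,β')/D(β₁,β₂)| = 2|β₁ - β₂|/(β₁ + β₂ + W), on the region where β₁ ≠ β₂ and 4β₁β₂ - W² > 0 and β₁+β₂+W > 0. -/
theorem stmt_4 (W : ℝ) (hW : 0 < W)
    (F : ℝ × ℝ → ℝ × ℝ)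
    (hF : F = fun p => ((p.1 + p.2 + W)/2, (4*p.1*p.2 - W^2)/(p.1 + p.2 + W)))
    (β₁ β₂ : ℝ) (hne : β₁ ≠ β₂) (hpd : 0 < 4*β₁*β₂ - W^2) (hsum : 0 < β₁ + β₂ + W) :
    |LinearMap.det ((fderiv ℝ F (β₁, β₂)) : ℝ × ℝ →ₗ[ℝ] ℝ × ℝ)|
      = 2*|β₁ - β₂|/(β₁ + β₂ + W) := by
  have hs : β₁ + β₂ + W ≠ 0 := ne_of_gt hsum
  have h1 : HasFDerivAt (fun p : ℝ × ℝ => (p.1 + p.2 + W) * (2:ℝ)⁻¹) _ (β₁, β₂) :=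
    ((HasFDerivAt.add (𝕜 := ℝ) hasFDerivAt_fst hasFDerivAt_snd).add_const W).mul_const (𝕜 := ℝ) _
  have hN : HasFDerivAt (fun p : ℝ × ℝ => 4*p.1*p.2 - W^2) _ (β₁, β₂) :=
    (HasFDerivAt.mul (𝕜 := ℝ) (hasFDerivAt_fst.const_mul 4) hasFDerivAt_snd).sub_const (W^2)
  have hD : HasFDerivAt (fun p : ℝ × ℝ => p.1 + p.2 + W) _ (β₁, β₂) :=
    (HasFDerivAt.add (𝕜 := ℝ) hasFDerivAt_fst hasFDerivAt_snd).add_const W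
  have hInv : HasFDerivAt (fun p : ℝ × ℝ => (p.1 + p.2 + W)⁻¹) _ (β₁, β₂) :=
    (hasDerivAt_inv hs).comp_hasFDerivAt (β₁, β₂) hD
  have h2 : HasFDerivAt (fun p : ℝ × ℝ => (4*p.1*p.2 - W^2) * (p.1 + p.2 + W)⁻¹) _ (β₁, β₂) := hN.mul hInv
  have hd := h1.prodMk h2
  rw [hF]
  simp only [div_eq_mul_inv]
  rw [hd.fderiv]
  rw [← LinearMap.det_toMatrix (Module.Basis.finTwoProd ℝ), Matrix.det_fin_two]
  simp only [LinearMap.toMatrix_apply, Module.Basis.finTwoProd_zero, Module.Basis.finTwoProd_one,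
    ContinuousLinearMap.coe_coe, Module.Basis.coe_finTwoProd_repr, ContinuousLinearMap.prod_apply,
    ContinuousLinearMap.add_apply, ContinuousLinearMap.coe_smul', Pi.smul_apply,
    ContinuousLinearMap.coe_fst', ContinuousLinearMap.coe_snd', ContinuousLinearMap.neg_apply,
    smul_eq_mul, Matrix.cons_val_zero, Matrix.cons_val_one, Matrix.head_cons]
  have h2s : |2 * (β₁ - β₂) * (β₁ + β₂ + W)⁻¹| = 2 * |β₁ - β₂| * (β₁ + β₂ + W)⁻¹ := by
    rw [abs_mul, abs_mul, abs_of_pos (by norm_num : (0:ℝ) < 2),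
      abs_of_pos (inv_pos.mpr hsum)]
  rw [← h2s]
  congr 1
  field_simp
  ring
end

section
/- With 2β̌ = β₁ + β₂ + W, 2β' defined by 1/(2β') = (1/4)(2β₁+2β₂+2W)/(4β₁β₂-W²), and Ξ > 0 defined by 1/Ξ = (β₁+β₂+W)/(2|β₁-β₂|), one has Ξ = √(4β̌² - 2β'β̌ - 4Wβ̌)/β̌ whenever β₁ ≠ β₂, 4β₁β₂ - W² > 0 and β₁+β₂+W > 0. -/
theorem stmt_5 (W β₁ β₂ : ℝ) (hne : β₁ ≠ β₂) (hpd : 0 < 4*β₁*β₂ - W^2)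
    (hsum : 0 < β₁ + β₂ + W)
    (βcheck β' Ξ : ℝ)
    (hβcheck : 2 * βcheck = β₁ + β₂ + W)
    (hβ' : 1/(2*β') = (1/4) * (2*β₁ + 2*β₂ + 2*W)/(4*β₁*β₂ - W^2))
    (hΞpos : 0 < Ξ)
    (hΞ : 1/Ξ = (β₁ + β₂ + W)/(2*|β₁ - β₂|)) :
    Ξ = Real.sqrt (4*βcheck^2 - 2*β'*βcheck - 4*W*βcheck) / βcheck := by
  have hd : β₁ - β₂ ≠ 0 := sub_ne_zero.mpr hne
  have habs : 0 < |β₁ - β₂| := abs_pos.mpr hd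
  have hβcpos : 0 < βcheck := by linarith
  have hβ'pos : 0 < 2 * β' := by
    have h1 : 0 < 1 / (2*β') := by
      rw [hβ']
      exact div_pos (by linarith) hpd
    exact (one_div_pos).mp h1
  rw [div_eq_div_iff hβ'pos.ne' hpd.ne'] at hβ'
  have hkey : 4*βcheck^2 - 2*β'*βcheck - 4*W*βcheck = (β₁ - β₂)^2 := by
    linear_combination (2*βcheck + (β₁+β₂+W) - 2*W - β') * hβcheck + hβ'
  rw [hkey, Real.sqrt_sq_eq_abs]
  rw [div_eq_div_iff hΞpos.ne' (by positivity : (2*|β₁ - β₂|:ℝ) ≠ 0)] at hΞ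
  rw [eq_div_iff hβcpos.ne']
  linear_combination (Ξ/2) * hβcheck - (1/2) * hΞ
end

section
/- Let V be a finite set, U ⊂ V, and H a symmetric positive definite V×V matrix with H(i,k) = H(j,k) for all i,j ∈ U and k ∉ U. Let G = H⁻¹. Then for all i,j ∈ U and all k,l ∈ V \ U: G(i,k)/G(j,k) = G(i,l)/G(j,l), i.e., the rows of G indexed by U are proportional on the columns outside U. -/
theorem stmt_12 {V : Type*} [Fintype V] [DecidableEq V] (U : Set V)
    (H : Matrix V V ℝ) (hsymm : H.IsSymm) (hpd : H.PosDef)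
    (hind : ∀ i ∈ U, ∀ j ∈ U, ∀ k ∉ U, H i k = H j k)
    (G : Matrix V V ℝ) (hG : G = H⁻¹) :
    ∀ i ∈ U, ∀ j ∈ U, ∀ k ∉ U, ∀ l ∉ U,
      G j k ≠ 0 → G j l ≠ 0 →
      G i k / G j k = G i l / G j l := by
  classical
  intro i hi j hj k hk l hl hjk hjl
  have hHG : H * G = 1 := by
    rw [hG, Matrix.mul_nonsing_inv H (Matrix.isUnit_iff_isUnit_det H |>.1 hpd.isUnit)]
  -- key vanishing lemma
  have key : ∀ x : V → ℝ, (∀ m, m ∉ U → x m = 0) →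
      (∀ m ∈ U, ∑ n, H m n * x n = 0) → x = 0 := by
    intro x hx0 hxU
    by_contra hne
    have hpos := hpd.dotProduct_mulVec_pos hne
    have : dotProduct (star x) (H.mulVec x) = 0 := by
      simp only [dotProduct, Pi.star_apply, star_trivial, Matrix.mulVec]
      refine Finset.sum_eq_zero fun m _ => ?_
      by_cases hm : m ∈ U
      · rw [hxU m hm, mul_zero]
      · rw [hx0 m hm, zero_mul]
    rw [this] at hpos
    exact lt_irrefl 0 hpos
  -- t k' : the common outside contribution
  set t : V → ℝ := fun k' => ∑ n ∈ Finset.univ.filter (fun n => n ∉ U), H i n * G n k' with ht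
  have hAU : ∀ m ∈ U, ∀ k' ∉ U,
      ∑ n ∈ Finset.univ.filter (fun n => n ∈ U), H m n * G n k' = - t k' := by
    intro m hm k' hk'
    have h0 : ∑ n, H m n * G n k' = 0 := by
      have : (H * G) m k' = 0 := by
        rw [hHG]
        exact Matrix.one_apply_ne (fun h => hk' (h ▸ hm))
      simpa [Matrix.mul_apply] using this
    have hsplit := Finset.sum_filter_add_sum_filter_not Finset.univ (fun n => n ∈ U)
      (fun n => H m n * G n k')
    have hout : ∑ n ∈ Finset.univ.filter (fun n => ¬ n ∈ U), H m n * G n k' = t k' := by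
      refine Finset.sum_congr rfl fun n hn => ?_
      rw [Finset.mem_filter] at hn
      rw [hind m hm i hi n hn.2]
    rw [h0] at hsplit
    rw [hout] at hsplit
    linarith
  -- nondegeneracy of t
  have htne : ∀ k' ∉ U, (∃ m ∈ U, G m k' ≠ 0) → t k' ≠ 0 := by
    intro k' hk' ⟨m, hm, hGm⟩ htz
    have hx := key (fun n => if n ∈ U then G n k' else 0)
      (fun n hn => by simp [hn])
      (fun n hn => by
        have : ∑ p, H n p * (if p ∈ U then G p k' else 0)
            = ∑ p ∈ Finset.univ.filter (fun p => p ∈ U), H n p * G p k' := by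
          rw [Finset.sum_filter]
          refine Finset.sum_congr rfl fun p _ => ?_
          split <;> simp
        rw [this, hAU n hn k' hk', htz, neg_zero])
    have := congrFun hx m
    simp [hm] at this
    exact hGm this
  have htk : t k ≠ 0 := htne k hk ⟨j, hj, hjk⟩
  have htl : t l ≠ 0 := htne l hl ⟨j, hj, hjl⟩
  -- main proportionality
  have hx := key (fun m => if m ∈ U then t l * G m k - t k * G m l else 0)
    (fun m hm => by simp [hm])
    (fun m hm => by
      have : ∑ p, H m p * (if p ∈ U then t l * G p k - t k * G p l else 0)
          = t l * (∑ p ∈ Finset.univ.filter (fun p => p ∈ U), H m p * G p k)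
            - t k * (∑ p ∈ Finset.univ.filter (fun p => p ∈ U), H m p * G p l) := by
        rw [Finset.mul_sum, Finset.mul_sum, ← Finset.sum_sub_distrib,
          Finset.sum_filter]
        refine Finset.sum_congr rfl fun p _ => ?_
        split <;> ring
      rw [this, hAU m hm k hk, hAU m hm l hl]
      ring)
  have heqi : t l * G i k = t k * G i l := by
    have := congrFun hx i
    simp [hi] at this
    linarith
  have heqj : t l * G j k = t k * G j l := by
    have := congrFun hx j
    simp [hj] at this
    linarith
  rw [div_eq_div_iff hjk hjl]
  have hmul : t l * (G i k * G j l) = t l * (G i l * G j k) := by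
    calc t l * (G i k * G j l) = (t l * G i k) * G j l := by ring
    _ = (t k * G i l) * G j l := by rw [heqi]
    _ = G i l * (t k * G j l) := by ring
    _ = G i l * (t l * G j k) := by rw [heqj]
    _ = t l * (G i l * G j k) := by ring
  exact mul_left_cancel₀ htl hmul
end
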